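/- With V the disjoint union of m copies of a finite group G and N the normalizer of R(G) in Sym(V), the stabilizer in N of the point 1_r (the identity element in the r-th copy) equals (L_1 × ⋯ × L_{r-1} × L_{r+1} × ⋯ × L_m) ⋊ ((S_m)_{G_r} × Aut(G)), where (S_m)_{G_r} ≅ S_{m-1} is the stabilizer of index r in S_m. -/

import Mathlib

/-- Right multiplication permutation `R(g) : x_i ↦ (xg)_i` on `V = Fin m × G`. -/
def Rperm (m : ℕ) {G : Type*} [Group G] (g : G) : Equiv.Perm (Fin m × G) where
  toFun v := (v.1, v.2 * g)
  invFun v := (v.1, v.2 * g⁻¹)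
  left_inv v := by simp
  right_inv v := by simp

/-- The subgroup `R(G) = {R(g) : g ∈ G}` of `Sym(V)`. -/
def RG (m : ℕ) (G : Type*) [Group G] : Subgroup (Equiv.Perm (Fin m × G)) where
  carrier := {σ | ∃ g : G, σ = Rperm m g}
  one_mem' := ⟨1, Equiv.ext fun v => by simp [Rperm]⟩
  mul_mem' := by
    rintro _ _ ⟨g, rfl⟩ ⟨h, rfl⟩
    exact ⟨h * g, Equiv.ext fun v => by simp [Rperm, mul_assoc]⟩
  inv_mem' := by
    rintro _ ⟨g, rfl⟩
    exact ⟨g⁻¹, Equiv.ext fun v => by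
      simp [Rperm, Equiv.Perm.inv_def]⟩

/-- `LLperm f : x_i ↦ ((f i)⁻¹ x)_i`, the product `L_1(f 1) ⋯ L_m(f m)`. -/
def LLperm (m : ℕ) {G : Type*} [Group G] (f : Fin m → G) : Equiv.Perm (Fin m × G) where
  toFun v := (v.1, (f v.1)⁻¹ * v.2)
  invFun v := (v.1, f v.1 * v.2)
  left_inv v := by simp
  right_inv v := by simp

/-- The subgroup `L = L_1 × ⋯ × L_m` of `Sym(V)`. -/
def LL (m : ℕ) (G : Type*) [Group G] : Subgroup (Equiv.Perm (Fin m × G)) where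
  carrier := {σ | ∃ f : Fin m → G, σ = LLperm m f}
  one_mem' := ⟨fun _ => 1, Equiv.ext fun v => by simp [LLperm]⟩
  mul_mem' := by
    rintro _ _ ⟨f, rfl⟩ ⟨f', rfl⟩
    exact ⟨fun i => f' i * f i, Equiv.ext fun v => by simp [LLperm, mul_assoc]⟩
  inv_mem' := by
    rintro _ ⟨f, rfl⟩
    exact ⟨fun i => (f i)⁻¹, Equiv.ext fun v => by
      simp [LLperm, Equiv.Perm.inv_def]⟩

/-- `S_m` acting on `V` by permuting the indices: `σ : x_i ↦ x_{σ(i)}`. -/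
def Pperm (m : ℕ) (G : Type*) [Group G] (σ : Equiv.Perm (Fin m)) :
    Equiv.Perm (Fin m × G) :=
  Equiv.prodCongr σ (Equiv.refl G)

/-- The image of `S_m` in `Sym(V)`. -/
def Ssub (m : ℕ) (G : Type*) [Group G] : Subgroup (Equiv.Perm (Fin m × G)) where
  carrier := {p | ∃ σ : Equiv.Perm (Fin m), p = Pperm m G σ}
  one_mem' := ⟨1, Equiv.ext fun v => by simp [Pperm]⟩
  mul_mem' := by
    rintro _ _ ⟨σ, rfl⟩ ⟨τ, rfl⟩
    exact ⟨σ * τ, Equiv.ext fun v => by cases v; simp [Pperm]⟩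
  inv_mem' := by
    rintro _ ⟨σ, rfl⟩
    exact ⟨σ⁻¹, Equiv.ext fun v => by simp [Pperm, Equiv.Perm.inv_def]⟩

/-- `Aut(G)` acting diagonally on `V`: `α : x_i ↦ (x^α)_i`. -/
def Aperm (m : ℕ) {G : Type*} [Group G] (α : MulAut G) : Equiv.Perm (Fin m × G) :=
  Equiv.prodCongr (Equiv.refl (Fin m)) α.toEquiv

/-- The image of `Aut(G)` in `Sym(V)`. -/
def Asub (m : ℕ) (G : Type*) [Group G] : Subgroup (Equiv.Perm (Fin m × G)) where
  carrier := {p | ∃ α : MulAut G, p = Aperm m α}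
  one_mem' := ⟨1, Equiv.ext fun v => by simp [Aperm]⟩
  mul_mem' := by
    rintro _ _ ⟨α, rfl⟩ ⟨β, rfl⟩
    exact ⟨α * β, Equiv.ext fun v => by cases v; simp [Aperm]⟩
  inv_mem' := by
    rintro _ ⟨α, rfl⟩
    exact ⟨α⁻¹, Equiv.ext fun v => by cases v; simp [Aperm, Equiv.Perm.inv_def, MulAut.inv_def]⟩


/-- The subgroup `L_1 × ⋯ × L_{r-1} × L_{r+1} × ⋯ × L_m` (left multiplications
that are trivial on the `r`-th copy). -/
def Lnot (m : ℕ) (G : Type*) [Group G] (r : Fin m) : Subgroup (Equiv.Perm (Fin m × G)) where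
  carrier := {σ | ∃ f : Fin m → G, f r = 1 ∧ σ = LLperm m f}
  one_mem' := ⟨fun _ => 1, rfl, Equiv.ext fun v => by simp [LLperm]⟩
  mul_mem' := by
    rintro _ _ ⟨f, hf, rfl⟩ ⟨f', hf', rfl⟩
    exact ⟨fun i => f' i * f i, by simp [hf, hf'],
      Equiv.ext fun v => by simp [LLperm, mul_assoc]⟩
  inv_mem' := by
    rintro _ ⟨f, hf, rfl⟩
    exact ⟨fun i => (f i)⁻¹, by simp [hf], Equiv.ext fun v => by
      simp [LLperm, Equiv.Perm.inv_def]⟩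

/-- The stabilizer `(S_m)_{G_r}` of the index `r` inside the copy of `S_m` in `Sym(V)`. -/
def SstabR (m : ℕ) (G : Type*) [Group G] (r : Fin m) : Subgroup (Equiv.Perm (Fin m × G)) where
  carrier := {p | ∃ σ : Equiv.Perm (Fin m), σ r = r ∧ p = Pperm m G σ}
  one_mem' := ⟨1, rfl, Equiv.ext fun v => by simp [Pperm]⟩
  mul_mem' := by
    rintro _ _ ⟨σ, hσ, rfl⟩ ⟨τ, hτ, rfl⟩
    exact ⟨σ * τ, by simp [hσ, hτ], Equiv.ext fun v => by cases v; simp [Pperm]⟩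
  inv_mem' := by
    rintro _ ⟨σ, hσ, rfl⟩
    refine ⟨σ⁻¹, ?_, Equiv.ext fun v => by simp [Pperm, Equiv.Perm.inv_def]⟩
    simpa using congrArg (σ⁻¹ : Equiv.Perm (Fin m)) hσ |>.symm

/-!
An element `σ` of the normalizer of `R(G)` satisfies `σ R(g) = R(ψ g) σ` for some map `ψ`.
If moreover `σ` fixes `1_r`, then evaluating at `(r, g)` gives `σ (r, g) = (r, ψ g)`, which forces
`ψ` to be an automorphism of `G` (its inverse comes from `σ⁻¹`). Then `ψ⁻¹` acting diagonally,
followed by `σ`, centralizes `R(G)`, and a permutation centralizing `R(G)` has the form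
`x_i ↦ (b_i x)_{τ i}`, i.e. lies in `S_m L`; fixing `1_r` forces `τ r = r` and `b_r = 1`.
-/

section

variable {m : ℕ} {G : Type*} [Group G]

@[simp] lemma Rperm_apply (g : G) (v : Fin m × G) : Rperm m g v = (v.1, v.2 * g) := rfl

@[simp] lemma LLperm_apply (f : Fin m → G) (v : Fin m × G) :
    LLperm m f v = (v.1, (f v.1)⁻¹ * v.2) := rfl

@[simp] lemma Pperm_apply (τ : Equiv.Perm (Fin m)) (v : Fin m × G) :
    Pperm m G τ v = (τ v.1, v.2) := rfl

@[simp] lemma Aperm_apply (α : MulAut G) (v : Fin m × G) : Aperm m α v = (v.1, α v.2) := rfl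

lemma LLperm_commute_Rperm (f : Fin m → G) (g : G) : Commute (LLperm m f) (Rperm m g) :=
  Equiv.ext fun v => by simp [mul_assoc]

lemma Pperm_commute_Rperm (τ : Equiv.Perm (Fin m)) (g : G) :
    Commute (Pperm m G τ) (Rperm m g) :=
  Equiv.ext fun v => by simp

lemma Aperm_mul_Rperm (α : MulAut G) (g : G) :
    Aperm m α * Rperm m g = Rperm m (α g) * Aperm m α :=
  Equiv.ext fun v => by simp

lemma mem_normalizer_RG_of_semiconj {σ : Equiv.Perm (Fin m × G)} (α : MulAut G)
    (h : ∀ g, σ * Rperm m g = Rperm m (α g) * σ) : σ ∈ Subgroup.normalizer (RG m G) := by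
  have hconj : ∀ g, σ * Rperm m g * σ⁻¹ = Rperm m (α g) := fun g => by
    rw [mul_inv_eq_iff_eq_mul, h]
  refine Subgroup.mem_normalizer_iff.mpr fun p => ⟨?_, ?_⟩
  · rintro ⟨g, rfl⟩
    exact ⟨α g, hconj g⟩
  · rintro ⟨y, hy⟩
    refine ⟨α⁻¹ y, mul_left_cancel (mul_right_cancel (hy.trans ?_))⟩
    rw [hconj, MulAut.apply_inv_self]

lemma mem_normalizer_RG_of_commute {σ : Equiv.Perm (Fin m × G)}
    (h : ∀ g, Commute σ (Rperm m g)) : σ ∈ Subgroup.normalizer (RG m G) :=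
  mem_normalizer_RG_of_semiconj 1 fun g => h g

lemma exists_semiconj_of_mem_normalizer {σ : Equiv.Perm (Fin m × G)}
    (hσ : σ ∈ Subgroup.normalizer (RG m G)) :
    ∃ ψ : G → G, ∀ g, σ * Rperm m g = Rperm m (ψ g) * σ := by
  choose ψ hψ using fun g => (Subgroup.mem_normalizer_iff.mp hσ (Rperm m g)).mp ⟨g, rfl⟩
  exact ⟨ψ, fun g => by rw [← mul_inv_eq_iff_eq_mul, hψ]⟩

lemma exists_eq_Pperm_mul_LLperm_of_commute {π : Equiv.Perm (Fin m × G)}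
    (h : ∀ g, Commute π (Rperm m g)) :
    ∃ (τ : Equiv.Perm (Fin m)) (f : Fin m → G), π = Pperm m G τ * LLperm m f := by
  have hπ : ∀ i x, π (i, x) = ((π (i, 1)).1, (π (i, 1)).2 * x) := fun i x => by
    simpa using congrArg (· (i, 1)) (h x).eq
  have hsurj : Function.Surjective fun i => (π (i, 1)).1 := fun j => by
    obtain ⟨⟨i, x⟩, hix⟩ := π.surjective (j, 1)
    exact ⟨i, by rw [hπ] at hix; exact congrArg Prod.fst hix⟩
  refine ⟨Equiv.ofBijective _ (Finite.surjective_iff_bijective.mp hsurj),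
    fun i => (π (i, 1)).2⁻¹, Equiv.ext fun ⟨i, x⟩ => ?_⟩
  simp [hπ i x]

variable {r : Fin m} {σ : Equiv.Perm (Fin m × G)}

lemma exists_semiconj_apply_mk_of_mem (hσ : σ ∈ Subgroup.normalizer (RG m G) ⊓
      MulAction.stabilizer (Equiv.Perm (Fin m × G)) ((r, 1) : Fin m × G)) :
    ∃ ψ : G → G, (∀ g, σ * Rperm m g = Rperm m (ψ g) * σ) ∧ ∀ g, σ (r, g) = (r, ψ g) := by
  obtain ⟨ψ, hψ⟩ := exists_semiconj_of_mem_normalizer hσ.1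
  have hfix : σ (r, 1) = (r, 1) := hσ.2
  exact ⟨ψ, hψ, fun g => by simpa [hfix] using congrArg (· (r, 1)) (hψ g)⟩

lemma exists_mulAut_semiconj_of_mem (hσ : σ ∈ Subgroup.normalizer (RG m G) ⊓
      MulAction.stabilizer (Equiv.Perm (Fin m × G)) ((r, 1) : Fin m × G)) :
    ∃ α : MulAut G, ∀ g, σ * Rperm m g = Rperm m (α g) * σ := by
  obtain ⟨ψ, hψ, hσr⟩ := exists_semiconj_apply_mk_of_mem hσ
  obtain ⟨χ, -, hσr'⟩ := exists_semiconj_apply_mk_of_mem (inv_mem hσ)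
  have hmul : ∀ g h, ψ (g * h) = ψ g * ψ h := fun g h => by
    simpa [hσr] using congrArg (· (r, g)) (hψ h)
  have hinj : Function.Injective ψ := fun g h e => by
    simpa using σ.injective (by rw [hσr, hσr, e] : σ (r, g) = σ (r, h))
  have hsurj : Function.Surjective ψ := fun y => ⟨χ y, by
    simpa [hσr] using (congrArg σ (hσr' y)).symm⟩
  exact ⟨MulEquiv.ofBijective (MonoidHom.mk' ψ hmul) ⟨hinj, hsurj⟩, hψ⟩

lemma mem_sup_of_mem_normalizer_inf_stabilizer (hσ : σ ∈ Subgroup.normalizer (RG m G) ⊓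
      MulAction.stabilizer (Equiv.Perm (Fin m × G)) ((r, 1) : Fin m × G)) :
    σ ∈ Lnot m G r ⊔ (SstabR m G r ⊔ Asub m G) := by
  obtain ⟨α, hα⟩ := exists_mulAut_semiconj_of_mem hσ
  have hcomm : ∀ g, Commute (σ * Aperm m α⁻¹) (Rperm m g) := fun g => by
    rw [Commute, SemiconjBy, mul_assoc, Aperm_mul_Rperm, ← mul_assoc, hα,
      MulAut.apply_inv_self, mul_assoc]
  obtain ⟨τ, f, hτf⟩ := exists_eq_Pperm_mul_LLperm_of_commute hcomm
  have hfix : σ (r, 1) = (r, 1) := hσ.2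
  have hτf_fix : (Pperm m G τ * LLperm m f) (r, 1) = (r, 1) := by
    simpa [← hτf] using hfix
  simp only [Equiv.Perm.mul_apply, LLperm_apply, Pperm_apply, mul_one, Prod.mk.injEq,
    inv_eq_one] at hτf_fix
  have hσ_eq : σ = Pperm m G τ * LLperm m f * (Aperm m α⁻¹)⁻¹ := by
    rw [← hτf, mul_inv_cancel_right]
  rw [hσ_eq]
  exact mul_mem (mul_mem (Subgroup.mem_sup_right (Subgroup.mem_sup_left ⟨τ, hτf_fix.1, rfl⟩))
    (Subgroup.mem_sup_left ⟨f, hτf_fix.2, rfl⟩))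
    (Subgroup.mem_sup_right (Subgroup.mem_sup_right (inv_mem ⟨α⁻¹, rfl⟩)))

end

theorem stabilizer_in_N_general (G : Type*) [Group G] (m : ℕ) (r : Fin m) :
    Subgroup.normalizer (RG m G) ⊓
        MulAction.stabilizer (Equiv.Perm (Fin m × G)) ((r, 1) : Fin m × G) =
      Lnot m G r ⊔ (SstabR m G r ⊔ Asub m G) := by
  refine le_antisymm (fun σ hσ => mem_sup_of_mem_normalizer_inf_stabilizer hσ)
    (sup_le ?_ (sup_le ?_ ?_))
  · rintro _ ⟨f, hf, rfl⟩
    exact ⟨mem_normalizer_RG_of_commute (LLperm_commute_Rperm f),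
      by simp [Equiv.Perm.smul_def, hf]⟩
  · rintro _ ⟨τ, hτ, rfl⟩
    exact ⟨mem_normalizer_RG_of_commute (Pperm_commute_Rperm τ),
      by simp [Equiv.Perm.smul_def, hτ]⟩
  · rintro _ ⟨α, rfl⟩
    exact ⟨mem_normalizer_RG_of_semiconj α (Aperm_mul_Rperm α), by simp [Equiv.Perm.smul_def]⟩

/-- The stabilizer in `N = N_{Sym(V)}(R(G))` of the point `1_r`
(the identity in the `r`-th copy) equals
`(L_1 × ⋯ × L_{r-1} × L_{r+1} × ⋯ × L_m) ⋊ ((S_m)_{G_r} × Aut(G))`. -/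
theorem stabilizer_in_N (G : Type*) [Group G] [Finite G] (m : ℕ) (r : Fin m) :
    Subgroup.normalizer (RG m G) ⊓
        MulAction.stabilizer (Equiv.Perm (Fin m × G)) ((r, 1) : Fin m × G) =
      Lnot m G r ⊔ (SstabR m G r ⊔ Asub m G) :=
  stabilizer_in_N_general G m r
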